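/- Consider the optimal control problem of minimizing J_T(u;f) = (1/2)|y_0|²_{Σ_0} + (1/2)∑_{t=0}^{T-1}(|y_{t+1}|²_Q + |u_t|²_R) over deterministic controls u = (u_0,...,u_{T-1}) ∈ (ℝ^m)^T, subject to the backward dynamics y_t = ∑_{s=1}^{min(τ,T-t)} A_{t+s,s}ᵀ y_{t+s} + Cᵀ u_t with y_T = f. Assume R ≻ 0 and Σ_0, Q ⪰ 0. Then there exists a unique minimizer u^opt, characterized by the forward-backward system: y_t = ∑_{s=1}^{min(τ,T-t)} A_{t+s,s}ᵀ y_{t+s} + Cᵀ u_t^opt with y_T = f; η_t = ∑_{s=1}^{min(τ,t)} A_{t,s} η_{t-s} + Q y_t with η_0 = Σ_0 y_0; and u_t^opt = -R^{-1} C η_t for t = 0,...,T-1. -/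

import Mathlib

/-!
If `(u, y, η)` solves the forward-backward system with `R u_t = -C η_t`, summation by parts against
`η` shows that every admissible pair `(u', y')` costs `J(u, y) + J(u' - u, y' - y)`. Since `J ≥ 0`
and `R ≻ 0`, `u` is then the unique minimizer. A solution exists by linear algebra: the same
identity, for `f = 0` and the competitor `0`, shows that the map sending `u` to `R u + C η[u]` is an
injective endomorphism of `(ℝᵐ)ᵀ`, hence surjective.
-/

open Finset Matrix

section

variable (d m T τ : ℕ)
variable (A : ℕ → ℕ → Matrix (Fin d) (Fin d) ℝ) (C : Matrix (Fin m) (Fin d) ℝ)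
variable (Sig0 Q : Matrix (Fin d) (Fin d) ℝ) (R : Matrix (Fin m) (Fin m) ℝ)
variable (f : Fin d → ℝ)

/-- `y` is the backward dual process for control `u` and terminal condition `f`. -/
def IsDual (u : ℕ → Fin m → ℝ) (y : ℕ → Fin d → ℝ) : Prop :=
  y T = f ∧ ∀ t < T, y t =
    (∑ s ∈ Icc 1 (min τ (T - t)), (A (t + s) s)ᵀ.mulVec (y (t + s))) + Cᵀ.mulVec (u t)

/-- The optimal control cost `J_T(u;f)`, expressed through the dual state `y`. -/
noncomputable def costJ (u : ℕ → Fin m → ℝ) (y : ℕ → Fin d → ℝ) : ℝ :=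
  (1 / 2) * (y 0 ⬝ᵥ Sig0.mulVec (y 0)) +
    (1 / 2) * ∑ t ∈ range T, (y (t + 1) ⬝ᵥ Q.mulVec (y (t + 1)) + u t ⬝ᵥ R.mulVec (u t))

theorem Matrix.IsSymm.dotProduct_mulVec_comm {n α : Type*} [Fintype n] [CommSemiring α]
    {M : Matrix n n α} (hM : M.IsSymm) (a b : n → α) : a ⬝ᵥ M *ᵥ b = b ⬝ᵥ M *ᵥ a := by
  rw [← dotProduct_transpose_mulVec, hM.eq]

-- Both sides sum `F r s (r - s)` over the pairs `1 ≤ s ≤ τ`, `s ≤ r ≤ T`.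
theorem Finset.sum_range_sum_Icc_shift {M : Type*} [AddCommMonoid M] (T τ : ℕ)
    (F : ℕ → ℕ → ℕ → M) :
    ∑ t ∈ range T, ∑ s ∈ Icc 1 (min τ (T - t)), F (t + s) s t =
      ∑ r ∈ range T, ∑ s ∈ Icc 1 (min τ (r + 1)), F (r + 1) s (r + 1 - s) := by
  rw [sum_sigma', sum_sigma']
  refine sum_nbij' (fun p => ⟨p.1 + p.2 - 1, p.2⟩) (fun p => ⟨p.1 + 1 - p.2, p.2⟩) ?_ ?_ ?_ ?_ ?_
  all_goals
    rintro ⟨t, s⟩ h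
    simp only [mem_sigma, mem_range, mem_Icc, le_min_iff] at h ⊢
  · omega
  · omega
  · simp only [Sigma.mk.injEq, heq_eq_eq, and_true]; omega
  · simp only [Sigma.mk.injEq, heq_eq_eq, and_true]; omega
  · rw [Nat.sub_add_cancel (by omega), Nat.add_sub_cancel]

theorem Matrix.IsSymm.add_dotProduct_mulVec_add {n α : Type*} [Fintype n] [CommSemiring α]
    {M : Matrix n n α} (hM : M.IsSymm) (a b : n → α) :
    (a + b) ⬝ᵥ M *ᵥ (a + b) = a ⬝ᵥ M *ᵥ a + 2 * (b ⬝ᵥ M *ᵥ a) + b ⬝ᵥ M *ᵥ b := by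
  rw [mulVec_add, dotProduct_add, add_dotProduct, add_dotProduct, hM.dotProduct_mulVec_comm a b]
  ring

theorem Matrix.PosSemidef.isSymm {n : Type*} [Fintype n] {M : Matrix n n ℝ} (hM : M.PosSemidef) :
    M.IsSymm :=
  isHermitian_iff_isSymm.mp hM.isHermitian

theorem Matrix.PosSemidef.dotProduct_mulVec_self_nonneg {n : Type*} [Fintype n]
    {M : Matrix n n ℝ} (hM : M.PosSemidef) (x : n → ℝ) : 0 ≤ x ⬝ᵥ M *ᵥ x := by
  simpa using hM.dotProduct_mulVec_nonneg x

noncomputable def natExtendByZero (S M : Type*) [Semiring S] [AddCommMonoid M] [Module S M]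
    (T : ℕ) : (Fin T → M) →ₗ[S] ℕ → M :=
  LinearMap.pi fun n => if h : n < T then LinearMap.proj ⟨n, h⟩ else 0

theorem natExtendByZero_apply_of_lt {S M : Type*} [Semiring S] [AddCommMonoid M] [Module S M]
    {T n : ℕ} (x : Fin T → M) (h : n < T) : natExtendByZero S M T x n = x ⟨n, h⟩ := by
  simp [natExtendByZero, h]

section Development

variable {d m}

def IsMomentum (y η : ℕ → Fin d → ℝ) : Prop :=
  η 0 = Sig0 *ᵥ y 0 ∧
    ∀ t, 1 ≤ t → t ≤ T → η t = (∑ s ∈ Icc 1 (min τ t), A t s *ᵥ η (t - s)) + Q *ᵥ y t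

variable {T τ A C Sig0 Q R f}
variable {u u' v : ℕ → Fin m → ℝ} {y y' z η : ℕ → Fin d → ℝ}

theorem IsDual.sub (h' : IsDual d m T τ A C f u' y') (h : IsDual d m T τ A C f u y) :
    IsDual d m T τ A C 0 (u' - u) (y' - y) := by
  refine ⟨by simp [h'.1, h.1], fun t ht => ?_⟩
  simp only [Pi.sub_apply, h'.2 t ht, h.2 t ht, mulVec_sub, sum_sub_distrib]
  abel

theorem sum_dotProduct_mulVec_eq_of_isDual (hz : IsDual d m T τ A C 0 v z)
    (hη : IsMomentum T τ A Sig0 Q y η) :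
    ∑ t ∈ range T, v t ⬝ᵥ C *ᵥ η t =
      z 0 ⬝ᵥ Sig0 *ᵥ y 0 + ∑ t ∈ range T, z (t + 1) ⬝ᵥ Q *ᵥ y (t + 1) := by
  -- Summation by parts: both sides reduce to `∑ t, z t ⬝ᵥ η t` minus the same double sum.
  have hcontrol : ∀ t ∈ range T, v t ⬝ᵥ C *ᵥ η t =
      z t ⬝ᵥ η t - ∑ s ∈ Icc 1 (min τ (T - t)), z (t + s) ⬝ᵥ A (t + s) s *ᵥ η t := by
    intro t ht
    have hCv : Cᵀ *ᵥ v t = z t - ∑ s ∈ Icc 1 (min τ (T - t)), (A (t + s) s)ᵀ *ᵥ z (t + s) := by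
      rw [hz.2 t (mem_range.mp ht), add_sub_cancel_left]
    rw [← dotProduct_transpose_mulVec, hCv, dotProduct_sub, dotProduct_sum, dotProduct_comm]
    simp only [dotProduct_transpose_mulVec]
  have hstate : ∀ t ∈ range T, z (t + 1) ⬝ᵥ Q *ᵥ y (t + 1) =
      z (t + 1) ⬝ᵥ η (t + 1) -
        ∑ s ∈ Icc 1 (min τ (t + 1)), z (t + 1) ⬝ᵥ A (t + 1) s *ᵥ η (t + 1 - s) := by
    intro t ht
    rw [hη.2 (t + 1) (by omega) (by simpa using ht), dotProduct_add, dotProduct_sum]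
    abel
  have htelescope :
      ∑ t ∈ range T, z t ⬝ᵥ η t = z 0 ⬝ᵥ η 0 + ∑ t ∈ range T, z (t + 1) ⬝ᵥ η (t + 1) := by
    rw [add_comm, ← sum_range_succ' (fun t => z t ⬝ᵥ η t), sum_range_succ, hz.1, zero_dotProduct,
      add_zero]
  rw [sum_congr rfl hcontrol, sum_congr rfl hstate, sum_sub_distrib, sum_sub_distrib, htelescope,
    sum_range_sum_Icc_shift T τ fun r s t => z r ⬝ᵥ A r s *ᵥ η t, hη.1,
    add_sub_assoc]

theorem costJ_add (hSig0 : Sig0.IsSymm) (hQ : Q.IsSymm) (hR : R.IsSymm) :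
    costJ d m T Sig0 Q R (u + v) (y + z) = costJ d m T Sig0 Q R u y + costJ d m T Sig0 Q R v z +
      (z 0 ⬝ᵥ Sig0 *ᵥ y 0 + ∑ t ∈ range T, (z (t + 1) ⬝ᵥ Q *ᵥ y (t + 1) + v t ⬝ᵥ R *ᵥ u t)) := by
  simp only [costJ, Pi.add_apply, hSig0.add_dotProduct_mulVec_add, hQ.add_dotProduct_mulVec_add,
    hR.add_dotProduct_mulVec_add, sum_add_distrib, ← mul_sum]
  ring

theorem costJ_nonneg (hSig0 : Sig0.PosSemidef) (hQ : Q.PosSemidef) (hR : R.PosSemidef) :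
    0 ≤ costJ d m T Sig0 Q R v z := by
  have hSig0z := hSig0.dotProduct_mulVec_self_nonneg (z 0)
  have hsum : 0 ≤ ∑ t ∈ range T, (z (t + 1) ⬝ᵥ Q *ᵥ z (t + 1) + v t ⬝ᵥ R *ᵥ v t) :=
    sum_nonneg fun t _ => add_nonneg (hQ.dotProduct_mulVec_self_nonneg _)
      (hR.dotProduct_mulVec_self_nonneg _)
  unfold costJ
  positivity

theorem eq_zero_of_costJ_nonpos (hSig0 : Sig0.PosSemidef) (hQ : Q.PosSemidef) (hR : R.PosDef)
    (h : costJ d m T Sig0 Q R v z ≤ 0) : ∀ t < T, v t = 0 := by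
  intro t ht
  by_contra hv
  have hpos : 0 < v t ⬝ᵥ R *ᵥ v t := by simpa using hR.dotProduct_mulVec_pos hv
  have hterm : z (t + 1) ⬝ᵥ Q *ᵥ z (t + 1) + v t ⬝ᵥ R *ᵥ v t ≤
      ∑ s ∈ range T, (z (s + 1) ⬝ᵥ Q *ᵥ z (s + 1) + v s ⬝ᵥ R *ᵥ v s) :=
    single_le_sum (f := fun s => z (s + 1) ⬝ᵥ Q *ᵥ z (s + 1) + v s ⬝ᵥ R *ᵥ v s)
      (fun s _ => add_nonneg (hQ.dotProduct_mulVec_self_nonneg _)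
        (hR.posSemidef.dotProduct_mulVec_self_nonneg _)) (mem_range.mpr ht)
  unfold costJ at h
  linarith [hSig0.dotProduct_mulVec_self_nonneg (z 0), hQ.dotProduct_mulVec_self_nonneg (z (t + 1))]

theorem costJ_eq_add_costJ_sub (hSig0 : Sig0.IsSymm) (hQ : Q.IsSymm) (hR : R.IsSymm)
    (hy : IsDual d m T τ A C f u y) (hη : IsMomentum T τ A Sig0 Q y η)
    (hstat : ∀ t < T, R *ᵥ u t = -(C *ᵥ η t)) (hy' : IsDual d m T τ A C f u' y') :
    costJ d m T Sig0 Q R u' y' =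
      costJ d m T Sig0 Q R u y + costJ d m T Sig0 Q R (u' - u) (y' - y) := by
  have hpairing := sum_dotProduct_mulVec_eq_of_isDual (hy'.sub hy) hη
  have hcontrol : ∑ t ∈ range T, (u' - u) t ⬝ᵥ R *ᵥ u t =
      -∑ t ∈ range T, (u' - u) t ⬝ᵥ C *ᵥ η t := by
    rw [← sum_neg_distrib]
    exact sum_congr rfl fun t ht => by rw [hstat t (mem_range.mp ht), dotProduct_neg]
  calc costJ d m T Sig0 Q R u' y'
      = costJ d m T Sig0 Q R (u + (u' - u)) (y + (y' - y)) := by rw [add_sub_cancel, add_sub_cancel]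
    _ = _ := by rw [costJ_add hSig0 hQ hR, sum_add_distrib, hcontrol, hpairing]; ring

theorem costJ_le_of_stationary (hSig0 : Sig0.PosSemidef) (hQ : Q.PosSemidef) (hR : R.PosSemidef)
    (hy : IsDual d m T τ A C f u y) (hη : IsMomentum T τ A Sig0 Q y η)
    (hstat : ∀ t < T, R *ᵥ u t = -(C *ᵥ η t)) (hy' : IsDual d m T τ A C f u' y') :
    costJ d m T Sig0 Q R u y ≤ costJ d m T Sig0 Q R u' y' := by
  rw [costJ_eq_add_costJ_sub hSig0.isSymm hQ.isSymm hR.isSymm hy hη hstat hy']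
  linarith [costJ_nonneg (v := u' - u) (z := y' - y) (T := T) hSig0 hQ hR]

theorem eq_of_stationary_of_costJ_le (hSig0 : Sig0.PosSemidef) (hQ : Q.PosSemidef) (hR : R.PosDef)
    (hy : IsDual d m T τ A C f u y) (hη : IsMomentum T τ A Sig0 Q y η)
    (hstat : ∀ t < T, R *ᵥ u t = -(C *ᵥ η t)) (hy' : IsDual d m T τ A C f u' y')
    (hle : costJ d m T Sig0 Q R u' y' ≤ costJ d m T Sig0 Q R u y) : ∀ t < T, u' t = u t := by
  rw [costJ_eq_add_costJ_sub hSig0.isSymm hQ.isSymm hR.posSemidef.isSymm hy hη hstat hy'] at hle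
  intro t ht
  exact sub_eq_zero.mp (eq_zero_of_costJ_nonpos hSig0 hQ hR (by linarith) t ht)

end Development

section Construction

variable {d m}

noncomputable def backwardSol (t : ℕ) : ((ℕ → Fin m → ℝ) × (Fin d → ℝ)) →ₗ[ℝ] Fin d → ℝ :=
  if t < T then
    (∑ s ∈ (Icc 1 (min τ (T - t))).attach, (A (t + s) s)ᵀ.mulVecLin ∘ₗ backwardSol (t + s)) +
      Cᵀ.mulVecLin ∘ₗ LinearMap.proj t ∘ₗ LinearMap.fst ℝ _ _
  else LinearMap.snd ℝ _ _
termination_by T - t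
decreasing_by
  have hs := s.2
  simp only [mem_Icc] at hs
  omega

theorem isDual_backwardSol (u : ℕ → Fin m → ℝ) (g : Fin d → ℝ) :
    IsDual d m T τ A C g u fun t => backwardSol T τ A C t (u, g) := by
  refine ⟨by dsimp only; rw [backwardSol, if_neg (lt_irrefl T)]; rfl, fun t ht => ?_⟩
  dsimp only
  rw [backwardSol, if_pos ht]
  simp only [LinearMap.add_apply, LinearMap.sum_apply, LinearMap.comp_apply,
    mulVecLin_apply, LinearMap.proj_apply, LinearMap.fst_apply]
  rw [sum_attach (Icc 1 (min τ (T - t)))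
    fun s => (A (t + s) s)ᵀ *ᵥ backwardSol T τ A C (t + s) (u, g)]

noncomputable def forwardSol : ℕ → (ℕ → Fin d → ℝ) →ₗ[ℝ] Fin d → ℝ
  | 0 => Sig0.mulVecLin ∘ₗ LinearMap.proj 0
  | t + 1 =>
    (∑ s ∈ (Icc 1 (min τ (t + 1))).attach, (A (t + 1) s).mulVecLin ∘ₗ forwardSol (t + 1 - s)) +
      Q.mulVecLin ∘ₗ LinearMap.proj (t + 1)
decreasing_by
  have hs := s.2
  simp only [mem_Icc] at hs
  omega

theorem isMomentum_forwardSol (y : ℕ → Fin d → ℝ) :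
    IsMomentum T τ A Sig0 Q y fun t => forwardSol τ A Sig0 Q t y := by
  refine ⟨by dsimp only; rw [forwardSol]; rfl, fun t ht _ => ?_⟩
  obtain ⟨t, rfl⟩ := Nat.exists_eq_add_of_le' ht
  dsimp only
  rw [forwardSol]
  simp only [LinearMap.add_apply, LinearMap.sum_apply, LinearMap.comp_apply,
    mulVecLin_apply, LinearMap.proj_apply]
  rw [sum_attach (Icc 1 (min τ (t + 1)))
    fun s => A (t + 1) s *ᵥ forwardSol τ A Sig0 Q (t + 1 - s) y]

-- The linear part of `u ↦ R u + C η`, where `η` is the momentum of the dual state of `u`.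
noncomputable def stationarityMap : (Fin T → Fin m → ℝ) →ₗ[ℝ] Fin T → Fin m → ℝ :=
  LinearMap.pi fun t => R.mulVecLin ∘ₗ LinearMap.proj t + C.mulVecLin ∘ₗ forwardSol τ A Sig0 Q t ∘ₗ
    LinearMap.pi (backwardSol T τ A C) ∘ₗ LinearMap.inl ℝ _ _ ∘ₗ natExtendByZero ℝ _ T

variable {Sig0 Q R}

theorem stationarityMap_injective (hSig0 : Sig0.PosSemidef) (hQ : Q.PosSemidef) (hR : R.PosDef) :
    Function.Injective (stationarityMap T τ A C Sig0 Q R) := by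
  refine (injective_iff_map_eq_zero _).mpr fun uu huu => ?_
  set u := natExtendByZero ℝ (Fin m → ℝ) T uu
  set y := fun n => backwardSol T τ A C n (u, 0)
  have hu : ∀ t (ht : t < T), u t = uu ⟨t, ht⟩ := fun t ht => natExtendByZero_apply_of_lt uu ht
  have hstat : ∀ t < T, R *ᵥ u t = -(C *ᵥ forwardSol τ A Sig0 Q t y) := fun t ht => by
    rw [hu t ht]
    exact eq_neg_of_add_eq_zero_left (congrFun huu ⟨t, ht⟩)
  have hzero : IsDual d m T τ A C 0 0 0 := ⟨rfl, fun t _ => by simp⟩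
  have hcost : costJ d m T Sig0 Q R 0 0 ≤ costJ d m T Sig0 Q R u y := by
    rw [show costJ d m T Sig0 Q R 0 0 = 0 by simp [costJ]]
    exact costJ_nonneg hSig0 hQ hR.posSemidef
  have hu0 := eq_of_stationary_of_costJ_le hSig0 hQ hR (isDual_backwardSol T τ A C u 0)
    (isMomentum_forwardSol T τ A Sig0 Q y) hstat hzero hcost
  funext t
  rw [← hu t t.2]
  exact (hu0 t t.2).symm

theorem exists_stationary (hSig0 : Sig0.PosSemidef) (hQ : Q.PosSemidef) (hR : R.PosDef) :
    ∃ (u : ℕ → Fin m → ℝ) (y η : ℕ → Fin d → ℝ), IsDual d m T τ A C f u y ∧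
      IsMomentum T τ A Sig0 Q y η ∧ ∀ t < T, R *ᵥ u t = -(C *ᵥ η t) := by
  set η : ((ℕ → Fin m → ℝ) × (Fin d → ℝ)) → ℕ → Fin d → ℝ :=
    fun p t => forwardSol τ A Sig0 Q t fun n => backwardSol T τ A C n p
  obtain ⟨uu, huu⟩ := LinearMap.injective_iff_surjective.mp
    (stationarityMap_injective T τ A C hSig0 hQ hR) fun t => -(C *ᵥ η (0, f) t)
  set u := natExtendByZero ℝ (Fin m → ℝ) T uu
  have hη : ∀ t, η (u, f) t = η (u, 0) t + η (0, f) t := fun t => by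
    rw [show (u, f) = (u, 0) + (0, f) by simp]
    exact map_add (forwardSol τ A Sig0 Q t ∘ₗ LinearMap.pi (backwardSol T τ A C)) (u, 0) (0, f)
  refine ⟨u, _, η (u, f), isDual_backwardSol T τ A C u f, isMomentum_forwardSol T τ A Sig0 Q _,
    fun t ht => ?_⟩
  have hut : u t = uu ⟨t, ht⟩ := natExtendByZero_apply_of_lt uu ht
  have hres : R *ᵥ uu ⟨t, ht⟩ + C *ᵥ η (u, 0) t = -(C *ᵥ η (0, f) t) := congrFun huu ⟨t, ht⟩
  rw [hut, hη, mulVec_add, neg_add, ← hres]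
  abel

end Construction

theorem ocp_linear_existence_uniqueness
    (hSig0 : Sig0.PosSemidef) (hQ : Q.PosSemidef) (hR : R.PosDef) :
    ∃ (u : ℕ → Fin m → ℝ) (y η : ℕ → Fin d → ℝ),
      -- backward equation with the optimal control
      IsDual d m T τ A C f u y ∧
      -- forward equation for the momentum process
      η 0 = Sig0.mulVec (y 0) ∧
      (∀ t, 1 ≤ t → t ≤ T → η t =
        (∑ s ∈ Icc 1 (min τ t), (A t s).mulVec (η (t - s))) + Q.mulVec (y t)) ∧
      -- optimal control formula
      (∀ t < T, u t = -(R⁻¹.mulVec (C.mulVec (η t)))) ∧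
      -- optimality
      (∀ (u' : ℕ → Fin m → ℝ) (y' : ℕ → Fin d → ℝ), IsDual d m T τ A C f u' y' →
        costJ d m T Sig0 Q R u y ≤ costJ d m T Sig0 Q R u' y') ∧
      -- uniqueness of the minimizer
      (∀ (u' : ℕ → Fin m → ℝ) (y' : ℕ → Fin d → ℝ), IsDual d m T τ A C f u' y' →
        costJ d m T Sig0 Q R u' y' = costJ d m T Sig0 Q R u y →
        ∀ t < T, u' t = u t) := by
  obtain ⟨u, y, η, hy, hη, hstat⟩ := exists_stationary T τ A C f hSig0 hQ hR
  refine ⟨u, y, η, hy, hη.1, hη.2, fun t ht => ?_,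
    fun u' y' hy' => costJ_le_of_stationary hSig0 hQ hR.posSemidef hy hη hstat hy',
    fun u' y' hy' hcost => eq_of_stationary_of_costJ_le hSig0 hQ hR hy hη hstat hy' hcost.le⟩
  rw [← mulVec_neg, ← hstat t ht, mulVec_mulVec,
    nonsing_inv_mul R ((isUnit_iff_isUnit_det R).mp hR.isUnit), one_mulVec]

end
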